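/- For all x ≤ y and x' ≤ y' in \overline{[n]}, the maximum H((x,y)⊗(x',y')) := max{ θ_j, θ'_j, η_j, η'_j evaluated at (x,y)⊗(x',y') : j ∈ {1,…,n} } equals 2 if and only if x ≥ y'. -/
import Mathlib


open Classical in
/-- `chi P` is 1 if `P` holds and 0 otherwise. -/
noncomputable def chi (P : Prop) : ℤ := if P then 1 else 0

/-- The involution `x ↦ 2n+1-x` on `{1,…,2n}` (the set `\overline{[n]}`). -/
def bar (n : ℕ) (x : ℤ) : ℤ := 2 * (n : ℤ) + 1 - x

/-- `θ_j((x,y) ⊗ (x',y'))`. -/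
noncomputable def thetaJ (n : ℕ) (j x y x' y' : ℤ) : ℤ :=
  chi (bar n j < x) + chi (bar n j < y) - chi (bar n j < x') - chi (bar n j < y')

/-- `θ'_j((x,y) ⊗ (x',y'))`. -/
noncomputable def thetaJ' (n : ℕ) (j x y x' y' : ℤ) : ℤ :=
  chi (x' < j) + chi (y' < j) - chi (x < j) - chi (y < j)

/-- `η_j((x,y) ⊗ (x',y'))`. -/
noncomputable def etaJ (n : ℕ) (j x y x' y' : ℤ) : ℤ :=
  chi (bar n j ≤ x) + chi (bar n j ≤ y) - chi (bar n j < x') - chi (bar n j < y')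
    - chi (x = j) - chi (y = j)

/-- `η'_j((x,y) ⊗ (x',y'))`. -/
noncomputable def etaJ' (n : ℕ) (j x y x' y' : ℤ) : ℤ :=
  chi (x' ≤ j) + chi (y' ≤ j) - chi (x < j) - chi (y < j)
    - chi (x' = bar n j) - chi (y' = bar n j)

/-- The Kang–Kashiwara–Misra energy
`H((x,y) ⊗ (x',y')) = max {θ_j, θ'_j, η_j, η'_j : j ∈ {1,…,n}}`. -/
noncomputable def Henergy (n : ℕ) (hn : 1 ≤ n) (x y x' y' : ℤ) : ℤ :=
  (Finset.Icc (1 : ℤ) (n : ℤ)).sup'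
    (Finset.nonempty_Icc.mpr (by exact_mod_cast hn))
    (fun j => max (max (thetaJ n j x y x' y') (thetaJ' n j x y x' y'))
                  (max (etaJ n j x y x' y') (etaJ' n j x y x' y')))

/-- The simple formula `H'((x,y) ⊗ (x',y'))`. -/
noncomputable def Hprime (n : ℕ) (x y x' y' : ℤ) : ℤ :=
  if bar n y' ≠ x then
    chi (x' ≤ x) + chi (y' ≤ y) - chi (y' ≤ y ∧ x < y' ∧ x' ≤ x)
  else
    chi (x' < x) + chi (y' < y) - chi (y' < y ∧ x < y' ∧ x' < x)

/-- the KKM energy `H((x,y)⊗(x',y'))` equals 2 iff `x ≥ y'`. -/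
theorem stmt_2 (n : ℕ) (hn : 2 ≤ n) (x y x' y' : ℤ)
    (hx : 1 ≤ x) (hxy : x ≤ y) (hy : y ≤ 2 * (n : ℤ))
    (hx' : 1 ≤ x') (hxy' : x' ≤ y') (hy' : y' ≤ 2 * (n : ℤ)) :
    Henergy n (by omega) x y x' y' = 2 ↔ y' ≤ x := by

  have hne : (Finset.Icc (1 : ℤ) (n : ℤ)).Nonempty :=
    Finset.nonempty_Icc.mpr (by exact_mod_cast (by omega : 1 ≤ n))
  set f : ℤ → ℤ := fun j => max (max (thetaJ n j x y x' y') (thetaJ' n j x y x' y'))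
                  (max (etaJ n j x y x' y') (etaJ' n j x y x' y')) with hf
  have hH : Henergy n (by omega) x y x' y' = (Finset.Icc (1 : ℤ) (n : ℤ)).sup' hne f := rfl
  have key : ∀ j ∈ Finset.Icc (1:ℤ) (n:ℤ), f j ≤ 2 := by
    intro j hj
    simp only [hf, thetaJ, thetaJ', etaJ, etaJ', chi, bar, max_le_iff]
    refine ⟨⟨?_, ?_⟩, ?_, ?_⟩ <;> split_ifs <;> omega
  rw [hH]
  constructor
  · intro h
    obtain ⟨j, hj, hjeq⟩ := Finset.exists_mem_eq_sup' hne f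
    rw [hjeq] at h
    rw [Finset.mem_Icc] at hj
    have h2 : (2:ℤ) ≤ f j := h.ge
    simp only [hf, le_max_iff] at h2
    rcases h2 with (h2 | h2) | (h2 | h2) <;>
      [skip; skip; skip; skip] <;>
      · first
        | (simp only [thetaJ, chi, bar] at h2; split_ifs at h2 <;> omega)
        | (simp only [thetaJ', chi, bar] at h2; split_ifs at h2 <;> omega)
        | (simp only [etaJ, chi, bar] at h2; split_ifs at h2 <;> omega)
        | (simp only [etaJ', chi, bar] at h2; split_ifs at h2 <;> omega)
  · intro h
    refine le_antisymm (Finset.sup'_le hne f key) ?_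
    by_cases hcase : y' ≤ (n:ℤ)
    · have hj : y' ∈ Finset.Icc (1:ℤ) (n:ℤ) := by
        rw [Finset.mem_Icc]; omega
      have h2 : (2:ℤ) ≤ etaJ' n y' x y x' y' := by
        simp only [etaJ', chi, bar]; split_ifs <;> omega
      calc (2:ℤ) ≤ etaJ' n y' x y x' y' := h2
        _ ≤ f y' := le_trans (le_max_right _ _) (le_max_right _ _)
        _ ≤ _ := Finset.le_sup' f hj
    · have hj : (2*(n:ℤ)+1-x) ∈ Finset.Icc (1:ℤ) (n:ℤ) := by
        rw [Finset.mem_Icc]; omega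
      have h2 : (2:ℤ) ≤ etaJ n (2*(n:ℤ)+1-x) x y x' y' := by
        simp only [etaJ, chi, bar]; split_ifs <;> omega
      calc (2:ℤ) ≤ etaJ n (2*(n:ℤ)+1-x) x y x' y' := h2
        _ ≤ f (2*(n:ℤ)+1-x) := le_trans (le_max_left _ _) (le_max_right _ _)
        _ ≤ _ := Finset.le_sup' f hj
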